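/- arXiv:1705.07345 — 7 statements merged into one kernel-verified Lean document; each statement's English description precedes it below -/
import Mathlib

section
/- Let k > 0, r₀ ∈ [k, a], and let ξ ∈ C¹([r₀, a]) with ξ(r₀) = 0 and ξ(a) = k·arccosh(a/k). Then ∫_{r₀}^{a} √(1 + ξ'(r)²) r dr ≥ a²/2 − r₀²/2 + (k²/2) ln a − C_k, where C_k depends only on k (not on r₀ or a). -/
/-! Calibration by the catenoid: for `r ≥ k` and any slope `p`, Cauchy–Schwarz gives
`√(1 + p²) r ≥ √(r² - k²) + k p`, with equality along the catenoid `ξ' = k / √(r² - k²)`.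
Integrating, `∫ √(1 + ξ'²) r dr ≥ ∫ √(r² - k²) dr + k (ξ(a) - ξ(r₀))`, and the boundary values
turn the last term into `k² arccosh (a / k) ≥ k² log (a / k)`. The expansion
`√(r² - k²) ≥ r - k² / (2r) - k⁴ / (2r³)` then produces `a²/2 - r₀²/2 - (k²/2) log (a / r₀)`
up to a bounded error, and the two logarithms combine into `(k²/2) log a` plus a constant. -/

open MeasureTheory

/-- The inverse hyperbolic cosine, `arccosh x = log (x + √(x² − 1))` (for `x ≥ 1`). -/
noncomputable def arccosh (x : ℝ) : ℝ := Real.log (x + Real.sqrt (x ^ 2 - 1))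

open Set intervalIntegral

lemma log_le_arccosh {x : ℝ} (hx : 0 < x) : Real.log x ≤ arccosh x :=
  Real.log_le_log hx (le_add_of_nonneg_right (Real.sqrt_nonneg _))

lemma sqrt_sq_sub_sq_add_mul_le {k r : ℝ} (hkr : |k| ≤ r) (p : ℝ) :
    √(r ^ 2 - k ^ 2) + k * p ≤ √(1 + p ^ 2) * r := by
  have hr : 0 ≤ r := (abs_nonneg k).trans hkr
  have hs : √(r ^ 2 - k ^ 2) ^ 2 = r ^ 2 - k ^ 2 :=
    Real.sq_sqrt (by nlinarith [sq_abs k, abs_nonneg k])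
  have ht : √(1 + p ^ 2) ^ 2 = 1 + p ^ 2 := Real.sq_sqrt (by positivity)
  -- Lagrange's identity with `s = √(r² - k²)`: `(s² + k²)(1 + p²) - (s + k p)² = (s p - k)²`.
  have hsq : (√(r ^ 2 - k ^ 2) + k * p) ^ 2 ≤ (√(1 + p ^ 2) * r) ^ 2 := by
    nlinarith [sq_nonneg (√(r ^ 2 - k ^ 2) * p - k)]
  exact le_of_sq_le_sq hsq (by positivity)

lemma sub_sub_le_sqrt_sq_sub_sq {k r : ℝ} (hr : 0 < r) (hkr : k ^ 2 ≤ r ^ 2) :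
    r - k ^ 2 / (2 * r) - k ^ 4 / (2 * r ^ 3) ≤ √(r ^ 2 - k ^ 2) := by
  set s := √(r ^ 2 - k ^ 2)
  have hs : s ^ 2 = r ^ 2 - k ^ 2 := Real.sq_sqrt (by linarith)
  have hs0 : 0 ≤ s := Real.sqrt_nonneg _
  have hk : k ^ 2 = r ^ 2 - s ^ 2 := by linarith
  rw [sub_sub, sub_le_comm, div_add_div _ _ (by positivity) (by positivity),
    le_div_iff₀ (by positivity)]
  -- After eliminating `k² = r² - s²` the claim is `s (r - s)² (2r + s) ≥ 0`.
  rw [show k ^ 4 = (k ^ 2) ^ 2 by ring, hk]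
  nlinarith [mul_nonneg (mul_nonneg hr.le hs0)
    (mul_nonneg (sq_nonneg (r - s)) (by positivity : 0 ≤ 2 * r + s))]

lemma le_integral_sqrt_sq_sub_sq {k r₀ a : ℝ} (hk : 0 < k) (hkr : k ≤ r₀) (hr : r₀ ≤ a) :
    a ^ 2 / 2 - r₀ ^ 2 / 2 - k ^ 2 / 2 * (Real.log a - Real.log r₀) - k ^ 2 / 4 ≤
      ∫ r in r₀..a, √(r ^ 2 - k ^ 2) := by
  have hr₀ : 0 < r₀ := hk.trans_le hkr
  have hne : ∀ r ∈ uIcc r₀ a, r ≠ 0 := fun r hr' => (hr₀.trans_le (uIcc_of_le hr ▸ hr').1).ne'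
  have hH : ∀ r ∈ uIcc r₀ a,
      HasDerivAt (fun r => r ^ 2 / 2 - k ^ 2 / 2 * Real.log r + k ^ 4 / 4 / r ^ 2)
        (r - k ^ 2 / (2 * r) - k ^ 4 / (2 * r ^ 3)) r := by
    intro r hr'
    have hr0 := hne r hr'
    refine ((((hasDerivAt_pow 2 r).div_const 2).sub
      ((Real.hasDerivAt_log hr0).const_mul (k ^ 2 / 2))).add
      (((hasDerivAt_pow 2 r).inv (pow_ne_zero 2 hr0)).const_mul (k ^ 4 / 4))).congr_deriv ?_
    field_simp
    ring
  have hcont : ContinuousOn (fun r => r - k ^ 2 / (2 * r) - k ^ 4 / (2 * r ^ 3)) (uIcc r₀ a) :=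
    fun r hr' => by
      have hr0 := hne r hr'
      fun_prop (disch := simp [hr0])
  have hFTC := integral_eq_sub_of_hasDerivAt hH (hcont.intervalIntegrable (μ := volume))
  have hmono := integral_mono_on hr (hcont.intervalIntegrable (μ := volume))
    ((by fun_prop : Continuous fun r : ℝ => √(r ^ 2 - k ^ 2)).intervalIntegrable _ _)
    fun r hr' => sub_sub_le_sqrt_sq_sub_sq (hr₀.trans_le hr'.1)
      (pow_le_pow_left₀ hk.le (hkr.trans hr'.1) 2)
  have hend : k ^ 4 / 4 / r₀ ^ 2 ≤ k ^ 2 / 4 := by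
    rw [div_le_iff₀ (by positivity)]
    nlinarith [pow_le_pow_left₀ hk.le hkr 2, sq_nonneg k]
  have ha : 0 ≤ k ^ 4 / 4 / a ^ 2 := by positivity
  linarith

lemma ContDiffOn.intervalIntegrable_comp_deriv {E G : Type*} [NormedAddCommGroup E]
    [NormedSpace ℝ E] [NormedAddCommGroup G] {f : ℝ → E} {a b : ℝ}
    (hf : ContDiffOn ℝ 1 f (Icc a b)) (hab : a ≤ b) {F : ℝ → E → G}
    (hF : Continuous (Function.uncurry F)) :
    IntervalIntegrable (fun x => F x (deriv f x)) volume a b := by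
  rcases hab.eq_or_lt with rfl | hlt
  · exact .refl
  have hD : ContinuousOn (derivWithin f (Icc a b)) (Icc a b) :=
    hf.continuousOn_derivWithin (uniqueDiffOn_Icc hlt) le_rfl
  have hFD : ContinuousOn (fun x => F x (derivWithin f (Icc a b) x)) (Icc a b) :=
    hF.comp_continuousOn (continuousOn_id.prodMk hD)
  refine (hFD.intervalIntegrable_of_Icc hab).congr_ae ?_
  rw [uIoc_of_le hab, ← restrict_Ioo_eq_restrict_Ioc]
  filter_upwards [self_mem_ae_restrict measurableSet_Ioo] with x hx
  rw [derivWithin_of_mem_nhds (Icc_mem_nhds hx.1 hx.2)]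

lemma integral_sqrt_sq_sub_sq_add_le {k r₀ a : ℝ} {ξ : ℝ → ℝ} (hkr : |k| ≤ r₀) (hr : r₀ ≤ a)
    (hξ : ContDiffOn ℝ 1 ξ (Icc r₀ a)) :
    (∫ r in r₀..a, √(r ^ 2 - k ^ 2)) + k * (ξ a - ξ r₀) ≤
      ∫ r in r₀..a, √(1 + deriv ξ r ^ 2) * r := by
  have hsqrt : IntervalIntegrable (fun r : ℝ => √(r ^ 2 - k ^ 2)) volume r₀ a :=
    (by fun_prop : Continuous fun r : ℝ => √(r ^ 2 - k ^ 2)).intervalIntegrable _ _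
  have hderiv := hξ.intervalIntegrable_comp_deriv hr (F := fun _ p => p) continuous_snd
  rw [← integral_deriv_of_contDiffOn_Icc hξ hr, ← intervalIntegral.integral_const_mul,
    ← intervalIntegral.integral_add hsqrt (hderiv.const_mul k)]
  exact integral_mono_on hr (hsqrt.add (hderiv.const_mul k))
    (hξ.intervalIntegrable_comp_deriv hr (F := fun r p => √(1 + p ^ 2) * r) (by fun_prop))
    fun r hr' => sqrt_sq_sub_sq_add_mul_le (hkr.trans hr'.1) _

/-- Let k > 0, r₀ ∈ [k, a], and let ξ ∈ C¹([r₀, a]) with ξ(r₀) = 0 and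
ξ(a) = k·arccosh(a/k). Then ∫_{r₀}^{a} √(1 + ξ'(r)²) r dr ≥
a²/2 − r₀²/2 + (k²/2) ln a − C_k, where C_k depends only on k (not on r₀ or a). -/
theorem stmt_2 (k : ℝ) (hk : 0 < k) :
    ∃ C : ℝ, ∀ r₀ a : ℝ, ∀ ξ : ℝ → ℝ,
      k ≤ r₀ → r₀ ≤ a →
      ContDiffOn ℝ 1 ξ (Set.Icc r₀ a) →
      ξ r₀ = 0 → ξ a = k * arccosh (a / k) →
      a ^ 2 / 2 - r₀ ^ 2 / 2 + k ^ 2 / 2 * Real.log a - C ≤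
        ∫ r in r₀..a, Real.sqrt (1 + (deriv ξ r) ^ 2) * r := by
  refine ⟨k ^ 2 / 2 * Real.log k + k ^ 2 / 4, fun r₀ a ξ hkr hr hξ hξ₀ hξa => ?_⟩
  have ha : 0 < a := hk.trans_le (hkr.trans hr)
  have hcalib := integral_sqrt_sq_sub_sq_add_le ((abs_of_pos hk).trans_le hkr) hr hξ
  have hexpand := le_integral_sqrt_sq_sub_sq hk hkr hr
  have harccosh : k ^ 2 * (Real.log a - Real.log k) ≤ k * (ξ a - ξ r₀) := by
    rw [hξ₀, hξa, ← Real.log_div ha.ne' hk.ne']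
    nlinarith [log_le_arccosh (div_pos ha hk)]
  have hlog : k ^ 2 * Real.log k ≤ k ^ 2 * Real.log r₀ :=
    mul_le_mul_of_nonneg_left (Real.log_le_log hk hkr) (by positivity)
  linarith
end

section
/- Let n ≥ 3 and let a₁: [r₀, ∞) → ℝ be bounded, monotone increasing with limit k ∈ (0,∞), and a₂: [r₀, ∞) → ℝ monotone decreasing with limit k. Let f₁, f₂ be C¹ functions on [r₀, ∞) with f_i'(r) = a_i(r)/r + η_i(r) where η_i(r) = O(r⁻³). If lim_{r→∞} (f₁(r) − f₂(r)) = 2, then ∫_{r₀}^∞ (k − a₁(s))/s ds < ∞ and ∫_{r₀}^∞ (a₂(s) − k)/s ds < ∞, and consequently there exists b ∈ ℝ such that f₁(r) − k·ln r − b → 0 as r → ∞. -/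
/-!
Put `φ = f₂ - f₁`. Monotonicity gives `a₁ ≤ k ≤ a₂`, so
`φ' = (k - a₁)/r + (a₂ - k)/r + (η₂ - η₁)` is the sum of two nonnegative terms and an
`O(r⁻³)` error, while `φ → -2`. The error is absorbed into the convergent function
`φ - C/r²`, whose derivative then dominates both nonnegative terms; a nonnegative derivative
of a convergent function is integrable, and so are the two terms. Finally
`(f₁ - k log r)' = η₁ - (k - a₁)/r` is integrable, so `f₁ - k log r` converges.
-/

open MeasureTheory Filter Set Topology

theorem ContDiffOn.hasDerivAt_deriv_of_mem_Ioi {f : ℝ → ℝ} {a x : ℝ}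
    (hf : ContDiffOn ℝ 1 f (Ici a)) (hx : x ∈ Ioi a) : HasDerivAt f (deriv f x) x :=
  ((hf.differentiableOn one_ne_zero).differentiableAt (Ici_mem_nhds hx)).hasDerivAt

theorem MonotoneOn.le_of_tendsto_atTop {α β : Type*} [SemilatticeSup α] [Nonempty α]
    [Preorder β] [TopologicalSpace β] [OrderClosedTopology β] {f : α → β} {a : α} {l : β}
    (hf : MonotoneOn f (Ici a)) (hl : Tendsto f atTop (𝓝 l)) {x : α} (hx : x ∈ Ici a) :
    f x ≤ l :=
  ge_of_tendsto hl <| (eventually_ge_atTop (x ⊔ a)).mono fun _ hy =>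
    hf hx (le_sup_right.trans hy) (le_sup_left.trans hy)

theorem AntitoneOn.le_of_tendsto_atTop {α β : Type*} [SemilatticeSup α] [Nonempty α]
    [Preorder β] [TopologicalSpace β] [OrderClosedTopology β] {f : α → β} {a : α} {l : β}
    (hf : AntitoneOn f (Ici a)) (hl : Tendsto f atTop (𝓝 l)) {x : α} (hx : x ∈ Ici a) :
    l ≤ f x :=
  MonotoneOn.le_of_tendsto_atTop (β := βᵒᵈ) hf hl hx

theorem integrableOn_Ioi_const_div_pow {a : ℝ} (ha : 0 < a) (C : ℝ) {m : ℕ} (hm : 2 ≤ m) :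
    IntegrableOn (fun x : ℝ => C / x ^ m) (Ioi a) := by
  have hlt : -(m : ℝ) < -1 := by norm_cast; omega
  refine IntegrableOn.congr_fun ((integrableOn_Ioi_rpow_of_lt hlt ha).const_mul C)
    (fun x hx => ?_) measurableSet_Ioi
  simp [Real.rpow_neg (ha.trans hx).le, div_eq_mul_inv]

theorem integrableOn_Ioi_of_nonneg_of_le_deriv {g G G' : ℝ → ℝ} {a l : ℝ}
    (hcont : ContinuousWithinAt G (Ici a) a) (hderiv : ∀ x ∈ Ioi a, HasDerivAt G (G' x) x)
    (hG : Tendsto G atTop (𝓝 l)) (hg : AEStronglyMeasurable g (volume.restrict (Ioi a)))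
    (hg_nonneg : ∀ x ∈ Ioi a, 0 ≤ g x) (hg_le : ∀ x ∈ Ioi a, g x ≤ G' x) :
    IntegrableOn g (Ioi a) := by
  refine Integrable.mono' (integrableOn_Ioi_deriv_of_nonneg hcont hderiv
    (fun x hx => (hg_nonneg x hx).trans (hg_le x hx)) hG) hg ?_
  filter_upwards [ae_restrict_mem measurableSet_Ioi] with x hx
  rw [Real.norm_of_nonneg (hg_nonneg x hx)]
  exact hg_le x hx

theorem hasDerivAt_const_div_sq (C : ℝ) {x : ℝ} (hx : x ≠ 0) :
    HasDerivAt (fun x => C / x ^ 2) (-(2 * C) / x ^ 3) x := by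
  refine ((hasDerivAt_const x C).div (hasDerivAt_pow 2 x) (pow_ne_zero 2 hx)).congr_deriv ?_
  field_simp
  ring

theorem integrableOn_Ioi_of_nonneg_of_le_deriv_add_div_cube {g φ φ' : ℝ → ℝ} {a l C : ℝ}
    (ha : 0 < a) (hcont : ContinuousWithinAt φ (Ici a) a)
    (hderiv : ∀ x ∈ Ioi a, HasDerivAt φ (φ' x) x) (hφ : Tendsto φ atTop (𝓝 l))
    (hg : AEStronglyMeasurable g (volume.restrict (Ioi a)))
    (hg_nonneg : ∀ x ∈ Ioi a, 0 ≤ g x) (hg_le : ∀ x ∈ Ioi a, g x ≤ φ' x + C / x ^ 3) :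
    IntegrableOn g (Ioi a) := by
  have hG : ∀ x ∈ Ioi a, HasDerivAt (fun x => φ x - C / 2 / x ^ 2) (φ' x + C / x ^ 3) x := by
    intro x hx
    exact ((hderiv x hx).sub (hasDerivAt_const_div_sq (C / 2) (ha.trans hx).ne')).congr_deriv
      (by ring)
  refine integrableOn_Ioi_of_nonneg_of_le_deriv (l := l - 0) ?_ hG ?_ hg hg_nonneg hg_le
  · exact hcont.sub (continuousWithinAt_const.div (continuousWithinAt_id.pow 2) (by positivity))
  · exact hφ.sub ((tendsto_pow_atTop two_ne_zero).const_div_atTop (C / 2))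

section Deficits

variable {r₀ k C : ℝ} {a₁ a₂ f₁ f₂ η₁ η₂ : ℝ → ℝ}

theorem integrableOn_Ioi_deficits_div (hr₀ : 0 < r₀)
    (ha₁mono : MonotoneOn a₁ (Ici r₀)) (ha₂anti : AntitoneOn a₂ (Ici r₀))
    (ha₁lim : Tendsto a₁ atTop (𝓝 k)) (ha₂lim : Tendsto a₂ atTop (𝓝 k))
    (hf₁ : ContDiffOn ℝ 1 f₁ (Ici r₀)) (hf₂ : ContDiffOn ℝ 1 f₂ (Ici r₀))
    (hder₁ : ∀ r ∈ Ici r₀, deriv f₁ r = a₁ r / r + η₁ r)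
    (hder₂ : ∀ r ∈ Ici r₀, deriv f₂ r = a₂ r / r + η₂ r)
    (hη : ∀ r ∈ Ici r₀, |η₁ r| ≤ C / r ^ 3 ∧ |η₂ r| ≤ C / r ^ 3)
    (hdiff : Tendsto (fun r => f₁ r - f₂ r) atTop (𝓝 2)) :
    IntegrableOn (fun s => (k - a₁ s) / s) (Ioi r₀) ∧
      IntegrableOn (fun s => (a₂ s - k) / s) (Ioi r₀) := by
  have hφ : Tendsto (fun x => f₂ x - f₁ x) atTop (𝓝 (-2)) := by simpa using hdiff.neg
  have hφ' (x : ℝ) (hx : x ∈ Ioi r₀) :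
      HasDerivAt (fun x => f₂ x - f₁ x) (deriv f₂ x - deriv f₁ x) x :=
    (hf₂.hasDerivAt_deriv_of_mem_Ioi hx).sub (hf₁.hasDerivAt_deriv_of_mem_Ioi hx)
  have hφc : ContinuousWithinAt (fun x => f₂ x - f₁ x) (Ici r₀) r₀ :=
    (hf₂.continuousOn.sub hf₁.continuousOn) r₀ self_mem_Ici
  have hsum (x : ℝ) (hx : x ∈ Ioi r₀) :
      (k - a₁ x) / x + (a₂ x - k) / x ≤ deriv f₂ x - deriv f₁ x + 2 * C / x ^ 3 := by
    have hx' : x ∈ Ici r₀ := Ioi_subset_Ici_self hx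
    obtain ⟨-, hη₁⟩ := abs_le.1 (hη x hx').1
    obtain ⟨hη₂, -⟩ := abs_le.1 (hη x hx').2
    rw [hder₁ x hx', hder₂ x hx']
    have : (k - a₁ x) / x + (a₂ x - k) / x = a₂ x / x - a₁ x / x := by ring
    have : 2 * C / x ^ 3 = C / x ^ 3 + C / x ^ 3 := by ring
    linarith
  have hg₁ (x : ℝ) (hx : x ∈ Ioi r₀) : 0 ≤ (k - a₁ x) / x :=
    div_nonneg (sub_nonneg.2 (ha₁mono.le_of_tendsto_atTop ha₁lim (Ioi_subset_Ici_self hx)))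
      (hr₀.trans hx).le
  have hg₂ (x : ℝ) (hx : x ∈ Ioi r₀) : 0 ≤ (a₂ x - k) / x :=
    div_nonneg (sub_nonneg.2 (ha₂anti.le_of_tendsto_atTop ha₂lim (Ioi_subset_Ici_self hx)))
      (hr₀.trans hx).le
  have hmeas₁ : AEMeasurable a₁ (volume.restrict (Ioi r₀)) :=
    aemeasurable_restrict_of_monotoneOn measurableSet_Ioi (ha₁mono.mono Ioi_subset_Ici_self)
  have hmeas₂ : AEMeasurable a₂ (volume.restrict (Ioi r₀)) :=
    aemeasurable_restrict_of_antitoneOn measurableSet_Ioi (ha₂anti.mono Ioi_subset_Ici_self)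
  exact ⟨integrableOn_Ioi_of_nonneg_of_le_deriv_add_div_cube hr₀ hφc hφ' hφ
      ((hmeas₁.const_sub k).div measurable_id.aemeasurable).aestronglyMeasurable hg₁
      fun x hx => (le_add_of_nonneg_right (hg₂ x hx)).trans (hsum x hx),
    integrableOn_Ioi_of_nonneg_of_le_deriv_add_div_cube hr₀ hφc hφ' hφ
      ((hmeas₂.sub_const k).div measurable_id.aemeasurable).aestronglyMeasurable hg₂
      fun x hx => (le_add_of_nonneg_left (hg₁ x hx)).trans (hsum x hx)⟩

theorem exists_tendsto_sub_mul_log_sub_nhds_zero (hr₀ : 0 < r₀)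
    (ha₁ : ∀ r ∈ Ioi r₀, a₁ r ≤ k)
    (hdeficit : IntegrableOn (fun s => (k - a₁ s) / s) (Ioi r₀))
    (hf₁ : ContDiffOn ℝ 1 f₁ (Ici r₀))
    (hder₁ : ∀ r ∈ Ici r₀, deriv f₁ r = a₁ r / r + η₁ r)
    (hη₁ : ∀ r ∈ Ici r₀, |η₁ r| ≤ C / r ^ 3) :
    ∃ b : ℝ, Tendsto (fun r => f₁ r - k * Real.log r - b) atTop (𝓝 0) := by
  have hF (x : ℝ) (hx : x ∈ Ioi r₀) :
      HasDerivAt (fun x => f₁ x - k * Real.log x) (deriv f₁ x - k / x) x :=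
    ((hf₁.hasDerivAt_deriv_of_mem_Ioi hx).sub
      ((Real.hasDerivAt_log (hr₀.trans hx).ne').const_mul k)).congr_deriv (by ring)
  have hF' : IntegrableOn (fun x => deriv f₁ x - k / x) (Ioi r₀) := by
    refine Integrable.mono'
      ((integrableOn_Ioi_const_div_pow hr₀ C (m := 3) (by norm_num)).add hdeficit)
      ((measurable_deriv f₁).sub (measurable_const.div measurable_id)).aestronglyMeasurable ?_
    filter_upwards [ae_restrict_mem measurableSet_Ioi] with x hx
    have hx' : x ∈ Ici r₀ := Ioi_subset_Ici_self hx
    have hdeficit_nonneg : 0 ≤ (k - a₁ x) / x :=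
      div_nonneg (sub_nonneg.2 (ha₁ x hx)) (hr₀.trans hx).le
    have : deriv f₁ x - k / x = η₁ x - (k - a₁ x) / x := by
      rw [hder₁ x hx']
      ring
    rw [Real.norm_eq_abs, this, Pi.add_apply]
    calc |η₁ x - (k - a₁ x) / x| ≤ |η₁ x| + |(k - a₁ x) / x| := abs_sub _ _
      _ = |η₁ x| + (k - a₁ x) / x := by rw [abs_of_nonneg hdeficit_nonneg]
      _ ≤ C / x ^ 3 + (k - a₁ x) / x := add_le_add_left (hη₁ x hx') _
  exact ⟨_, tendsto_sub_nhds_zero_iff.2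
    (tendsto_limUnder_of_hasDerivAt_of_integrableOn_Ioi hF hF')⟩

end Deficits

theorem stmt_5_general (r₀ k : ℝ) (hr₀ : 1 ≤ r₀)
    (a₁ a₂ f₁ f₂ η₁ η₂ : ℝ → ℝ)
    (ha₁mono : MonotoneOn a₁ (Set.Ici r₀))
    (ha₂anti : AntitoneOn a₂ (Set.Ici r₀))
    (ha₁lim : Tendsto a₁ atTop (nhds k))
    (ha₂lim : Tendsto a₂ atTop (nhds k))
    (hf₁ : ContDiffOn ℝ 1 f₁ (Set.Ici r₀))
    (hf₂ : ContDiffOn ℝ 1 f₂ (Set.Ici r₀))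
    (hder₁ : ∀ r ∈ Set.Ici r₀, deriv f₁ r = a₁ r / r + η₁ r)
    (hder₂ : ∀ r ∈ Set.Ici r₀, deriv f₂ r = a₂ r / r + η₂ r)
    (hη : ∃ C, ∀ r ∈ Set.Ici r₀, |η₁ r| ≤ C / r ^ 3 ∧ |η₂ r| ≤ C / r ^ 3)
    (hdiff : Tendsto (fun r => f₁ r - f₂ r) atTop (nhds 2)) :
    IntegrableOn (fun s => (k - a₁ s) / s) (Set.Ici r₀) ∧
    IntegrableOn (fun s => (a₂ s - k) / s) (Set.Ici r₀) ∧
    ∃ b : ℝ, Tendsto (fun r => f₁ r - k * Real.log r - b) atTop (nhds 0) := by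
  obtain ⟨C, hC⟩ := hη
  have hr₀pos : 0 < r₀ := by linarith
  obtain ⟨h₁, h₂⟩ := integrableOn_Ioi_deficits_div hr₀pos ha₁mono ha₂anti ha₁lim ha₂lim
    hf₁ hf₂ hder₁ hder₂ hC hdiff
  have ha₁ (r : ℝ) (hr : r ∈ Ioi r₀) : a₁ r ≤ k :=
    ha₁mono.le_of_tendsto_atTop ha₁lim (Ioi_subset_Ici_self hr)
  exact ⟨(integrableOn_Ici_iff_integrableOn_Ioi).2 h₁,
    (integrableOn_Ici_iff_integrableOn_Ioi).2 h₂,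
    exists_tendsto_sub_mul_log_sub_nhds_zero hr₀pos ha₁ h₁ hf₁ hder₁ fun r hr => (hC r hr).1⟩

/-- Let n ≥ 3 and let a₁ : [r₀, ∞) → ℝ be bounded, monotone increasing with
limit k ∈ (0,∞), and a₂ : [r₀, ∞) → ℝ monotone decreasing with limit k. Let f₁, f₂ be C¹
functions on [r₀, ∞) with fᵢ'(r) = aᵢ(r)/r + ηᵢ(r) where ηᵢ(r) = O(r⁻³). If
lim_{r→∞} (f₁(r) − f₂(r)) = 2, then ∫_{r₀}^∞ (k − a₁(s))/s ds < ∞ and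
∫_{r₀}^∞ (a₂(s) − k)/s ds < ∞, and consequently there exists b ∈ ℝ such that
f₁(r) − k·ln r − b → 0 as r → ∞. -/
theorem stmt_5 (n : ℕ) (hn : 3 ≤ n) (r₀ k : ℝ) (hr₀ : 1 ≤ r₀) (hk : 0 < k)
    (a₁ a₂ f₁ f₂ η₁ η₂ : ℝ → ℝ)
    (ha₁mono : MonotoneOn a₁ (Set.Ici r₀))
    (ha₂anti : AntitoneOn a₂ (Set.Ici r₀))
    (ha₁bdd : ∃ M, ∀ r ∈ Set.Ici r₀, |a₁ r| ≤ M)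
    (ha₁lim : Tendsto a₁ atTop (nhds k))
    (ha₂lim : Tendsto a₂ atTop (nhds k))
    (hf₁ : ContDiffOn ℝ 1 f₁ (Set.Ici r₀))
    (hf₂ : ContDiffOn ℝ 1 f₂ (Set.Ici r₀))
    (hder₁ : ∀ r ∈ Set.Ici r₀, deriv f₁ r = a₁ r / r + η₁ r)
    (hder₂ : ∀ r ∈ Set.Ici r₀, deriv f₂ r = a₂ r / r + η₂ r)
    (hη : ∃ C, ∀ r ∈ Set.Ici r₀, |η₁ r| ≤ C / r ^ 3 ∧ |η₂ r| ≤ C / r ^ 3)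
    (hdiff : Tendsto (fun r => f₁ r - f₂ r) atTop (nhds 2)) :
    IntegrableOn (fun s => (k - a₁ s) / s) (Set.Ici r₀) ∧
    IntegrableOn (fun s => (a₂ s - k) / s) (Set.Ici r₀) ∧
    ∃ b : ℝ, Tendsto (fun r => f₁ r - k * Real.log r - b) atTop (nhds 0) :=
  stmt_5_general r₀ k hr₀ a₁ a₂ f₁ f₂ η₁ η₂ ha₁mono ha₂anti ha₁lim ha₂lim hf₁ hf₂ hder₁ hder₂ hη
    hdiff
end

section
/- Let f: [r₀, ∞) → ℝ be C² with r f'(r)/√(1 + f'(r)²) monotone increasing in r (i.e., the graph z = f(r), as a surface of revolution in ℝ³, has nonnegative mean curvature with respect to the upward normal). If f is bounded, then f'(r) ≤ 0 for all r, and hence f is monotone decreasing; in particular lim_{r→∞} f(r) = inf over tails and lim_{r→∞} f(r) ≤ max f. -/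
open Filter Set Topology

/-! If `f'(r₁) > 0`, monotonicity of `r f' / √(1 + f'²)` gives `f' ≥ c / r` with `c > 0` beyond
`r₁`, so `f - c log` is nondecreasing there and `f` grows at least like `c log r`, contradicting
boundedness. Hence `f' ≤ 0`, and a bounded antitone function converges to its infimum. -/

lemma div_le_of_le_mul_div_sqrt_one_add_sq {c r y : ℝ} (hc : 0 ≤ c) (hr : 0 < r)
    (h : c ≤ r * y / √(1 + y ^ 2)) : c / r ≤ y := by
  have hsqrt : 1 ≤ √(1 + y ^ 2) := Real.one_le_sqrt.mpr (by nlinarith [sq_nonneg y])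
  have hmul : c * √(1 + y ^ 2) ≤ r * y := (le_div_iff₀ (by positivity)).mp h
  rw [div_le_iff₀ hr]
  nlinarith

lemma monotoneOn_sub_mul_log_of_div_le_deriv {f : ℝ → ℝ} {a c : ℝ} (ha : 0 < a)
    (hf : ContinuousOn f (Ici a)) (hd : DifferentiableOn ℝ f (Ioi a))
    (hlow : ∀ x ∈ Ioi a, c / x ≤ deriv f x) :
    MonotoneOn (fun x => f x - c * Real.log x) (Ici a) := by
  have hlog : ∀ x ∈ Ioi a, DifferentiableAt ℝ Real.log x := fun x hx =>
    Real.differentiableAt_log (ha.trans hx).ne'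
  have hfx : ∀ x ∈ Ioi a, DifferentiableAt ℝ f x := fun x hx =>
    hd.differentiableAt (Ioi_mem_nhds hx)
  refine monotoneOn_of_deriv_nonneg (convex_Ici a) ?_ ?_ ?_
  · exact hf.sub (continuousOn_const.mul
      (Real.continuousOn_log.mono fun x hx => (ha.trans_le hx).ne'))
  · rw [interior_Ici]
    exact fun x hx => ((hfx x hx).sub ((hlog x hx).const_mul c)).differentiableWithinAt
  · rw [interior_Ici]
    intro x hx
    rw [deriv_fun_sub (hfx x hx) ((hlog x hx).const_mul c),
      deriv_const_mul _ (hlog x hx), Real.deriv_log, ← div_eq_mul_inv, sub_nonneg]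
    exact hlow x hx

lemma tendsto_atTop_of_div_le_deriv {f : ℝ → ℝ} {a c : ℝ} (ha : 0 < a) (hc : 0 < c)
    (hf : ContinuousOn f (Ici a)) (hd : DifferentiableOn ℝ f (Ioi a))
    (hlow : ∀ x ∈ Ioi a, c / x ≤ deriv f x) :
    Tendsto f atTop atTop := by
  have hmono := monotoneOn_sub_mul_log_of_div_le_deriv ha hf hd hlow
  have hlog : Tendsto (fun x => f a - c * Real.log a + c * Real.log x) atTop atTop :=
    tendsto_atTop_add_const_left _ _ (Real.tendsto_log_atTop.const_mul_atTop hc)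
  refine tendsto_atTop_mono' _ ?_ hlog
  filter_upwards [eventually_ge_atTop a] with x hx
  have := hmono self_mem_Ici hx hx
  linarith

theorem deriv_nonpos_of_monotoneOn_of_bddAbove {f : ℝ → ℝ} {r₀ : ℝ} (hr₀ : 0 < r₀)
    (hf : ContinuousOn f (Ici r₀)) (hd : DifferentiableOn ℝ f (Ioi r₀))
    (hmono : MonotoneOn (fun r => r * deriv f r / √(1 + deriv f r ^ 2)) (Ici r₀))
    (hbdd : BddAbove (f '' Ici r₀)) :
    ∀ r ∈ Ici r₀, deriv f r ≤ 0 := by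
  intro r₁ hr₁
  by_contra! hpos
  have hr₁pos : 0 < r₁ := hr₀.trans_le hr₁
  set c := r₁ * deriv f r₁ / √(1 + deriv f r₁ ^ 2)
  have hc : 0 < c := by positivity
  have hlow : ∀ x ∈ Ioi r₁, c / x ≤ deriv f x := fun x hx =>
    div_le_of_le_mul_div_sqrt_one_add_sq hc.le (hr₁pos.trans hx)
      (hmono hr₁ (mem_Ici.mpr (hr₁.trans hx.le)) hx.le)
  have htop : Tendsto f atTop atTop :=
    tendsto_atTop_of_div_le_deriv hr₁pos hc (hf.mono (Ici_subset_Ici.mpr hr₁))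
      (hd.mono (Ioi_subset_Ioi hr₁)) hlow
  obtain ⟨M, hM⟩ := hbdd
  obtain ⟨x, hxM, hx⟩ := ((htop.eventually_gt_atTop M).and (eventually_ge_atTop r₀)).exists
  exact (hM (mem_image_of_mem f hx)).not_gt hxM

theorem AntitoneOn.exists_tendsto_atTop_of_bddBelow {α β : Type*} [LinearOrder α] [Nonempty α]
    [ConditionallyCompleteLinearOrder β] [TopologicalSpace β] [OrderTopology β]
    {f : α → β} {a : α} (hf : AntitoneOn f (Ici a)) (hbdd : BddBelow (f '' Ici a)) :
    ∃ L, Tendsto f atTop (𝓝 L) ∧ ∀ r ∈ Ici a, L ≤ f r := by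
  set g : α → β := fun r => f (max r a)
  have hg : Antitone g := fun x y hxy =>
    hf (le_max_right x a) (le_max_right y a) (max_le_max hxy le_rfl)
  have hgbdd : BddBelow (range g) :=
    hbdd.mono (range_subset_iff.mpr fun r => mem_image_of_mem f (le_max_right r a))
  have hlim : Tendsto g atTop (𝓝 (⨅ r, g r)) := tendsto_atTop_ciInf hg hgbdd
  have hfg : g =ᶠ[atTop] f := by
    filter_upwards [eventually_ge_atTop a] with r hr
    simp only [g, max_eq_left hr]
  refine ⟨⨅ r, g r, hlim.congr' hfg, fun r hr => ?_⟩
  simpa only [g, max_eq_left (show a ≤ r from hr)] using ciInf_le hgbdd r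

/-- Let f : [r₀, ∞) → ℝ be C² with r f'(r)/√(1 + f'(r)²) monotone increasing
in r (nonnegative mean curvature of the surface of revolution z = f(r) w.r.t. the upward
normal). If f is bounded, then f'(r) ≤ 0 for all r, hence f is monotone decreasing; in
particular f tends to a limit L at infinity with L ≤ f(r) for every r (so the limit is at
most max f). -/
theorem stmt_6 (r₀ : ℝ) (hr₀ : 0 < r₀) (f : ℝ → ℝ)
    (hf : ContDiffOn ℝ 2 f (Set.Ici r₀))
    (hmono : MonotoneOn (fun r => r * deriv f r / Real.sqrt (1 + (deriv f r) ^ 2))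
      (Set.Ici r₀))
    (hbdd : ∃ M, ∀ r ∈ Set.Ici r₀, |f r| ≤ M) :
    (∀ r ∈ Set.Ici r₀, deriv f r ≤ 0) ∧
    AntitoneOn f (Set.Ici r₀) ∧
    ∃ L : ℝ, Tendsto f atTop (nhds L) ∧ ∀ r ∈ Set.Ici r₀, L ≤ f r := by
  obtain ⟨M, hM⟩ := hbdd
  have hd : DifferentiableOn ℝ f (Ioi r₀) :=
    (hf.differentiableOn (by norm_num)).mono Ioi_subset_Ici_self
  have habove : BddAbove (f '' Ici r₀) :=
    ⟨M, by rintro _ ⟨r, hr, rfl⟩; exact (abs_le.mp (hM r hr)).2⟩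
  have hbelow : BddBelow (f '' Ici r₀) :=
    ⟨-M, by rintro _ ⟨r, hr, rfl⟩; exact (abs_le.mp (hM r hr)).1⟩
  have hderiv := deriv_nonpos_of_monotoneOn_of_bddAbove hr₀ hf.continuousOn hd hmono habove
  have hanti : AntitoneOn f (Ici r₀) :=
    antitoneOn_of_deriv_nonpos (convex_Ici r₀) hf.continuousOn (by rwa [interior_Ici])
      (fun x hx => hderiv x (interior_subset hx))
  exact ⟨hderiv, hanti, hanti.exists_tendsto_atTop_of_bddBelow hbelow⟩
end

section
/- Let n ≥ 4, k > k' ≥ 0, and let A be sufficiently large with A < a. Let ξ ∈ C¹([A, a]) be monotone increasing with ξ(A) = k' and ξ(a) = k. Then ∫_A^a √(1 + ξ'(r)²) r^{n−2} dr ≥ (a^{n−1} − A^{n−1})/(n−1) + (1/2)·√A·(k − k'). -/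
/-!
For `ρ² ≤ 1` the line `x ↦ 1 + ρx - ρ²` lies below `x ↦ √(1 + x²)`. Taking `ρ = √A / r ^ (n - 2)`
bounds the integrand below by `r ^ (n - 2) + √A ξ' - A / r²` on `[A, a]`, whose antiderivative
`r ^ (n - 1) / (n - 1) + √A ξ + A / r` gives the claim up to an error `A / A - A / a ≤ 1`;
once `√A (k - k') ≥ 2` this error is absorbed by half of the term `√A (k - k')`.
-/

open MeasureTheory Set

theorem one_add_mul_sub_sq_le_sqrt_one_add_sq {ρ : ℝ} (hρ : ρ ^ 2 ≤ 1) (x : ℝ) :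
    1 + ρ * x - ρ ^ 2 ≤ √(1 + x ^ 2) := by
  apply Real.le_sqrt_of_sq_le
  -- `1 + x² - (1 + ρx - ρ²)² = (1 - ρ²)(x - ρ)² + ρ²`
  nlinarith [mul_nonneg (sub_nonneg.2 hρ) (sq_nonneg (x - ρ)), sq_nonneg ρ]

theorem add_mul_sub_sq_div_le_sqrt_one_add_sq_mul {m c : ℝ} (hm : 0 < m) (hc : c ^ 2 ≤ m ^ 2)
    (x : ℝ) : m + c * x - c ^ 2 / m ≤ √(1 + x ^ 2) * m := by
  have hρ : (c / m) ^ 2 ≤ 1 := by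
    rw [div_pow, div_le_one (by positivity)]; exact hc
  calc m + c * x - c ^ 2 / m = (1 + c / m * x - (c / m) ^ 2) * m := by field_simp
    _ ≤ √(1 + x ^ 2) * m :=
      mul_le_mul_of_nonneg_right (one_add_mul_sub_sq_le_sqrt_one_add_sq hρ x) hm.le

theorem ContDiffOn.integrableOn_comp_deriv {f : ℝ → ℝ} {a b : ℝ} (hab : a < b)
    (hf : ContDiffOn ℝ 1 f (Icc a b)) {G : ℝ → ℝ → ℝ} (hG : Continuous (Function.uncurry G)) :
    IntegrableOn (fun r => G r (deriv f r)) (Icc a b) := by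
  have hcont : ContinuousOn (derivWithin f (Icc a b)) (Icc a b) :=
    hf.continuousOn_derivWithin (uniqueDiffOn_Icc hab) le_rfl
  have hint : IntegrableOn (fun r => G r (derivWithin f (Icc a b) r)) (Icc a b) :=
    (hG.comp_continuousOn (continuousOn_id.prodMk hcont)).integrableOn_Icc
  rw [integrableOn_Icc_iff_integrableOn_Ioo] at hint ⊢
  refine hint.congr_fun (fun r hr => ?_) measurableSet_Ioo
  simp only [derivWithin_of_mem_nhds (Icc_mem_nhds hr.1 hr.2)]

theorem pow_add_mul_sub_div_sq_le {n : ℕ} (hn : 4 ≤ n) {A r : ℝ} (hA : 1 ≤ A) (hr : A ≤ r)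
    (x : ℝ) : r ^ (n - 2) + √A * x - A / r ^ 2 ≤ √(1 + x ^ 2) * r ^ (n - 2) := by
  have hr1 : 1 ≤ r := hA.trans hr
  have hr2 : r ^ 2 ≤ r ^ (n - 2) := pow_le_pow_right₀ hr1 (by omega)
  have hm1 : 1 ≤ r ^ (n - 2) := one_le_pow₀ hr1
  have hc : √A ^ 2 ≤ (r ^ (n - 2)) ^ 2 := by
    rw [Real.sq_sqrt (by linarith)]
    nlinarith
  have hdiv : A / r ^ (n - 2) ≤ A / r ^ 2 :=
    div_le_div_of_nonneg_left (by linarith) (by positivity) hr2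
  have h := add_mul_sub_sq_div_le_sqrt_one_add_sq_mul (by positivity) hc x
  rw [Real.sq_sqrt (by linarith)] at h
  linarith

theorem hasDerivAt_pow_pred_div {n : ℕ} (hn : 2 ≤ n) (x : ℝ) :
    HasDerivAt (fun r : ℝ => r ^ (n - 1) / ((n : ℝ) - 1)) (x ^ (n - 2)) x := by
  refine ((hasDerivAt_pow (n - 1) x).div_const ((n : ℝ) - 1)).congr_deriv ?_
  have hn1 : (n : ℝ) - 1 ≠ 0 := by
    have : (2 : ℝ) ≤ n := by exact_mod_cast hn
    linarith
  rw [Nat.cast_sub (by omega), Nat.cast_one, show n - 1 - 1 = n - 2 by omega]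
  field_simp

theorem sub_one_le_integral_sqrt_one_add_deriv_sq_mul_pow {n : ℕ} (hn : 4 ≤ n) {A a : ℝ}
    (hA : 1 ≤ A) (hAa : A < a) {ξ : ℝ → ℝ} (hξ : ContDiffOn ℝ 1 ξ (Icc A a)) :
    (a ^ (n - 1) - A ^ (n - 1)) / ((n : ℝ) - 1) + √A * (ξ a - ξ A) - 1 ≤
      ∫ r in A..a, √(1 + deriv ξ r ^ 2) * r ^ (n - 2) := by
  set G : ℝ → ℝ := fun r => r ^ (n - 1) / ((n : ℝ) - 1) + √A * ξ r + A * r⁻¹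
  have hG : ∀ r ∈ Ioo A a,
      HasDerivAt G (r ^ (n - 2) + √A * deriv ξ r - A / r ^ 2) r := fun r hr =>
    (((hasDerivAt_pow_pred_div (by omega) r).add
      (((hξ.differentiableOn one_ne_zero).differentiableAt
        (Icc_mem_nhds hr.1 hr.2)).hasDerivAt.const_mul _)).add
      ((hasDerivAt_inv (by linarith [hr.1])).const_mul _)).congr_deriv (by ring)
  have hGcont : ContinuousOn G (Icc A a) :=
    (((continuous_pow _).div_const _).continuousOn.add (hξ.continuousOn.const_mul _)).add
      ((continuousOn_inv₀.mono fun r (hr : r ∈ Icc A a) => ne_of_gt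
        (by linarith [hr.1] : (0 : ℝ) < r)).const_mul A)
  have h := intervalIntegral.sub_le_integral_of_hasDeriv_right_of_le hAa.le hGcont
    (fun r hr => (hG r hr).hasDerivWithinAt)
    (hξ.integrableOn_comp_deriv hAa (G := fun r x => √(1 + x ^ 2) * r ^ (n - 2)) (by fun_prop))
    (fun r hr => pow_add_mul_sub_div_sq_le hn hA hr.1.le (deriv ξ r))
  have hAinv : A * A⁻¹ = 1 := mul_inv_cancel₀ (by linarith)
  have haInv : 0 ≤ A * a⁻¹ := mul_nonneg (by linarith) (inv_nonneg.2 (by linarith))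
  simp only [G] at h
  rw [sub_div]
  linarith

theorem stmt_10_general (n : ℕ) (hn : 4 ≤ n) (k k' : ℝ) (hkk : k' < k) :
    ∃ A₀ : ℝ, ∀ A a : ℝ, A₀ ≤ A → A < a → ∀ ξ : ℝ → ℝ,
      ContDiffOn ℝ 1 ξ (Set.Icc A a) →
      MonotoneOn ξ (Set.Icc A a) →
      ξ A = k' → ξ a = k →
      (a ^ (n - 1) - A ^ (n - 1)) / ((n : ℝ) - 1) + (1 / 2) * Real.sqrt A * (k - k') ≤
        ∫ r in A..a, Real.sqrt (1 + (deriv ξ r) ^ 2) * r ^ (n - 2) := by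
  refine ⟨max 1 ((2 / (k - k')) ^ 2), fun A a hA₀ hAa ξ hξ _ hξA hξa => ?_⟩
  have hA : 1 ≤ A := (le_max_left _ _).trans hA₀
  have hkk' : 0 < k - k' := sub_pos.2 hkk
  have hsqrt : 2 / (k - k') ≤ √A :=
    Real.le_sqrt_of_sq_le ((le_max_right _ _).trans hA₀)
  have hhalf : 1 ≤ (1 / 2) * √A * (k - k') := by
    rw [div_le_iff₀ hkk'] at hsqrt
    linarith
  have h := sub_one_le_integral_sqrt_one_add_deriv_sq_mul_pow hn hA hAa hξ
  rw [hξA, hξa] at h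
  linarith

/-- Let n ≥ 4, k > k' ≥ 0, and let A be sufficiently large with A < a.
Let ξ ∈ C¹([A, a]) be monotone increasing with ξ(A) = k' and ξ(a) = k. Then
∫_A^a √(1 + ξ'(r)²) r^{n−2} dr ≥ (a^{n−1} − A^{n−1})/(n−1) + (1/2)·√A·(k − k'). -/
theorem stmt_10 (n : ℕ) (hn : 4 ≤ n) (k k' : ℝ) (hk' : 0 ≤ k') (hkk : k' < k) :
    ∃ A₀ : ℝ, ∀ A a : ℝ, A₀ ≤ A → A < a → ∀ ξ : ℝ → ℝ,
      ContDiffOn ℝ 1 ξ (Set.Icc A a) →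
      MonotoneOn ξ (Set.Icc A a) →
      ξ A = k' → ξ a = k →
      (a ^ (n - 1) - A ^ (n - 1)) / ((n : ℝ) - 1) + (1 / 2) * Real.sqrt A * (k - k') ≤
        ∫ r in A..a, Real.sqrt (1 + (deriv ξ r) ^ 2) * r ^ (n - 2) :=
  stmt_10_general n hn k k' hkk
end

section
/- Let u: Ω → ℝ be harmonic in Ω = {|u| < 1} ⊂ ℝⁿ with |∇u| = 1 on ∂Ω, with sufficiently smooth free boundary, and suppose |∇u| ≤ 1 throughout {|u| < 1}. Then the mean curvature of ∂{|u| < 1} is nonnegative with respect to the unit normal pointing outwards of {|u| < 1}. -/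
/-!
At a free boundary point `x` we have `|∇u x| = 1`, and `Δu x = 0` by continuity from `Ω`, so the
product rule gives `div (∇u / |∇u|) x = -D|∇u| x (∇u x)`. Since `|∇u| ≤ 1` on `Ω`, the point `x` is
a maximum of `|∇u|` over `Ω`, so `|∇u|` cannot increase in a direction entering `Ω`. The direction
`-∇u x` enters `Ω` where `u x = 1`, and `∇u x` enters `Ω` where `u x = -1`.
-/

open Filter Set Topology

section Tangent

variable {E : Type*} [NormedAddCommGroup E] [NormedSpace ℝ E] {f : E → ℝ} {f' : E →L[ℝ] ℝ}
  {x d : E}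

theorem HasFDerivAt.eventually_lt_of_apply_neg (hf : HasFDerivAt f f' x) (hd : f' d < 0) :
    ∀ᶠ t in 𝓝[>] (0 : ℝ), f (x + t • d) < f x := by
  have hline : HasDerivAt (fun t : ℝ => f (x + t • d)) (f' d) 0 := by
    refine hf.comp_hasDerivAt_of_eq (x := (0 : ℝ)) ?_ (by simp)
    simpa using ((hasDerivAt_id (0 : ℝ)).smul_const d).const_add x
  filter_upwards [hline.tendsto_slope_zero_right.eventually (eventually_lt_nhds hd),
    self_mem_nhdsWithin] with t hslope (ht : 0 < t)
  simpa [smul_eq_mul, mul_neg_iff, ht, ht.not_gt] using hslope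

theorem HasFDerivAt.mem_posTangentConeAt_of_apply_neg (hf : HasFDerivAt f f' x) (hd : f' d < 0)
    {s : Set E} (hs : ∀ᶠ y in 𝓝 x, f y < f x → y ∈ s) : d ∈ posTangentConeAt s x := by
  refine mem_posTangentConeAt_of_frequently_mem (Eventually.frequently ?_)
  have hline : Tendsto (fun t : ℝ => x + t • d) (𝓝[>] 0) (𝓝 x) := by
    refine tendsto_nhdsWithin_of_tendsto_nhds ?_
    simpa using ((continuous_id.smul continuous_const).const_add x).tendsto' (0 : ℝ) x (by simp)
  filter_upwards [hf.eventually_lt_of_apply_neg hd, hline.eventually hs] with t hlt hmem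
  exact hmem hlt

theorem HasFDerivAt.mem_posTangentConeAt_abs_lt_one (hf : HasFDerivAt f f' x) (hx : f x = 1)
    (hd : f' d < 0) : d ∈ posTangentConeAt {y | |f y| < 1} x := by
  refine hf.mem_posTangentConeAt_of_apply_neg hd ?_
  filter_upwards [hf.continuousAt.eventually (lt_mem_nhds (by rw [hx]; norm_num : -1 < f x))]
    with y hlow hup
  exact abs_lt.2 ⟨hlow, hx ▸ hup⟩

end Tangent

noncomputable def divergence {ι : Type*} [Fintype ι] [DecidableEq ι]
    (F : EuclideanSpace ℝ ι → EuclideanSpace ℝ ι) (x : EuclideanSpace ℝ ι) : ℝ :=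
  ∑ i, fderiv ℝ (fun y => F y i) x (EuclideanSpace.single i 1)

section Divergence

variable {ι : Type*} [Fintype ι] {F : EuclideanSpace ℝ ι → EuclideanSpace ℝ ι}
  {x : EuclideanSpace ℝ ι}

theorem fderiv_piLp_apply (hF : DifferentiableAt ℝ F x) (i : ι) (v : EuclideanSpace ℝ ι) :
    fderiv ℝ (fun y => F y i) x v = fderiv ℝ F x v i :=
  congrArg (· v) ((PiLp.hasFDerivAt_apply 2 (F x) i).comp x hF.hasFDerivAt).fderiv

variable [DecidableEq ι]

theorem divergence_eq_sum_fderiv (hF : DifferentiableAt ℝ F x) :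
    divergence F x = ∑ i, fderiv ℝ F x (EuclideanSpace.single i 1) i := by
  simp only [divergence, fderiv_piLp_apply hF]

theorem ContDiffOn.continuousOn_divergence {U : Set (EuclideanSpace ℝ ι)} (hF : ContDiffOn ℝ 1 F U)
    (hU : IsOpen U) : ContinuousOn (divergence F) U := by
  have hcont : ContinuousOn (fderiv ℝ F) U := hF.continuousOn_fderiv_of_isOpen hU le_rfl
  refine ContinuousOn.congr (f := fun y => ∑ i, fderiv ℝ F y (EuclideanSpace.single i 1) i)
    (by fun_prop) fun y hy => divergence_eq_sum_fderiv ?_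
  exact (hF.differentiableOn one_ne_zero y hy).differentiableAt (hU.mem_nhds hy)

theorem divergence_smul {φ : EuclideanSpace ℝ ι → ℝ} (hφ : DifferentiableAt ℝ φ x)
    (hF : DifferentiableAt ℝ F x) :
    divergence (fun y => φ y • F y) x = φ x * divergence F x + fderiv ℝ φ x (F x) := by
  have hFi : ∀ i, DifferentiableAt ℝ (fun y => F y i) x := (differentiableAt_piLp 2).1 hF
  have hexpand : F x = ∑ i, F x i • EuclideanSpace.single i 1 := by
    simpa [EuclideanSpace.basisFun_apply] using ((EuclideanSpace.basisFun ι ℝ).sum_repr (F x)).symm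
  conv_rhs => rw [hexpand]
  simp only [divergence, PiLp.smul_apply, smul_eq_mul, fderiv_fun_mul hφ (hFi _), map_sum,
    map_smul, add_apply, smul_apply, Finset.sum_add_distrib, Finset.mul_sum]

theorem divergence_inv_norm_smul (hF : DifferentiableAt ℝ F x) (hFx : F x ≠ 0) :
    divergence (fun y => ‖F y‖⁻¹ • F y) x
      = ‖F x‖⁻¹ * divergence F x - (‖F x‖ ^ 2)⁻¹ * fderiv ℝ (fun y => ‖F y‖) x (F x) := by
  have hinv : HasFDerivAt (fun y => ‖F y‖⁻¹)
      ((ContinuousLinearMap.toSpanSingleton ℝ (-(‖F x‖ ^ 2)⁻¹)).comp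
        (fderiv ℝ (fun y => ‖F y‖) x)) x :=
    (hasFDerivAt_inv (norm_ne_zero_iff.2 hFx)).comp x (hF.norm ℝ hFx).hasFDerivAt
  rw [divergence_smul hinv.differentiableAt hF, hinv.fderiv]
  simp only [ContinuousLinearMap.comp_apply, ContinuousLinearMap.toSpanSingleton_apply,
    smul_eq_mul, mul_neg]
  ring

end Divergence

theorem ContDiffOn.gradient_of_isOpen {E : Type*} [NormedAddCommGroup E] [InnerProductSpace ℝ E]
    [CompleteSpace E] {u : E → ℝ} {U : Set E} {k : WithTop ℕ∞} (hu : ContDiffOn ℝ (k + 1) u U)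
    (hU : IsOpen U) : ContDiffOn ℝ k (gradient u) U :=
  (InnerProductSpace.toDual ℝ E).symm.contDiff.comp_contDiffOn (hu.fderiv_of_isOpen hU le_rfl)

theorem stmt_11_general (n : ℕ) (u : EuclideanSpace ℝ (Fin n) → ℝ)
    (U : Set (EuclideanSpace ℝ (Fin n))) (hU : IsOpen U)
    (Ω : Set (EuclideanSpace ℝ (Fin n))) (hΩ : Ω = {x | |u x| < 1})
    (hclos : closure Ω ⊆ U)
    (hu : ContDiffOn ℝ 2 u U)
    (hharm : ∀ x ∈ Ω,
      ∑ i, fderiv ℝ (fun y => gradient u y i) x (EuclideanSpace.single i 1) = 0)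
    (hgrad1 : ∀ x ∈ frontier Ω, ‖gradient u x‖ = 1)
    (hgradle : ∀ x ∈ Ω, ‖gradient u x‖ ≤ 1) :
    ∀ x ∈ frontier Ω,
      (u x = 1 →
        ∑ i, fderiv ℝ (fun y => (‖gradient u y‖⁻¹ • gradient u y) i) x
            (EuclideanSpace.single i 1) ≤ 0) ∧
      (u x = -1 →
        0 ≤ ∑ i, fderiv ℝ (fun y => (‖gradient u y‖⁻¹ • gradient u y) i) x
            (EuclideanSpace.single i 1)) := by
  intro x hx
  have hxcl : x ∈ closure Ω := frontier_subset_closure hx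
  have hxU : U ∈ 𝓝 x := hU.mem_nhds (hclos hxcl)
  have hG : ContDiffOn ℝ 1 (gradient u) U := hu.gradient_of_isOpen hU
  have hGx : DifferentiableAt ℝ (gradient u) x := (hG.contDiffAt hxU).differentiableAt one_ne_zero
  have hGx1 := hgrad1 x hx
  have hGx0 : gradient u x ≠ 0 := norm_ne_zero_iff.1 (by simp [hGx1])
  have hlap : divergence (gradient u) x = 0 := by
    have hcont := ((hG.continuousOn_divergence hU).continuousAt hxU).continuousWithinAt (s := Ω)
    simpa using hcont.mem_closure hxcl (t := {0}) hharm
  have hnormal : divergence (fun y => ‖gradient u y‖⁻¹ • gradient u y) x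
      = -fderiv ℝ (fun y => ‖gradient u y‖) x (gradient u x) := by
    simp [divergence_inv_norm_smul hGx hGx0, hlap, hGx1]
  have hmax : IsLocalMaxOn (fun y => ‖gradient u y‖) Ω x :=
    eventually_of_mem self_mem_nhdsWithin fun y hy => (hgradle y hy).trans_eq hGx1.symm
  have hux : HasFDerivAt u (fderiv ℝ u x) x :=
    ((hu.contDiffAt hxU).differentiableAt (by norm_num)).hasFDerivAt
  have hentering : ∀ d ∈ posTangentConeAt {y | |u y| < 1} x,
      fderiv ℝ (fun y => ‖gradient u y‖) x d ≤ 0 := fun d hd =>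
    hmax.hasFDerivWithinAt_nonpos (hGx.norm ℝ hGx0).hasFDerivAt.hasFDerivWithinAt (hΩ ▸ hd)
  have hgrad_sq : fderiv ℝ u x (gradient u x) = 1 := by
    rw [← inner_gradient_left, real_inner_self_eq_norm_sq, hGx1, one_pow]
  refine ⟨fun h1 => ?_, fun hm1 => ?_⟩
  · have hd := hentering _ (hux.mem_posTangentConeAt_abs_lt_one (d := -gradient u x) h1
      (by simp [hgrad_sq]))
    change divergence _ x ≤ 0
    simpa [hnormal] using hd
  · have hd := hentering _ (by
      simpa using hux.neg.mem_posTangentConeAt_abs_lt_one (d := gradient u x) (by simp [hm1])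
        (by simp [hgrad_sq]))
    change 0 ≤ divergence _ x
    simpa [hnormal] using hd

/-- Let u be harmonic in Ω = {|u| < 1} ⊂ ℝⁿ with |∇u| = 1 on ∂Ω, with
sufficiently smooth free boundary (u extends C² across the boundary), and suppose
|∇u| ≤ 1 throughout {|u| < 1}. Then the mean curvature of ∂{|u| < 1} is nonnegative with
respect to the unit normal pointing outwards of {|u| < 1}. Here the mean curvature at a
boundary point is −div ν, where ν = (u x)·∇u/|∇u| is the outward unit normal field
(equal to ∇u on {u = 1} and to −∇u on {u = −1}). -/
theorem stmt_11 (n : ℕ) (hn : 2 ≤ n) (u : EuclideanSpace ℝ (Fin n) → ℝ)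
    (U : Set (EuclideanSpace ℝ (Fin n))) (hU : IsOpen U)
    (Ω : Set (EuclideanSpace ℝ (Fin n))) (hΩ : Ω = {x | |u x| < 1})
    (hclos : closure Ω ⊆ U)
    (hu : ContDiffOn ℝ 2 u U)
    (hharm : ∀ x ∈ Ω,
      ∑ i, fderiv ℝ (fun y => gradient u y i) x (EuclideanSpace.single i 1) = 0)
    (hgrad1 : ∀ x ∈ frontier Ω, ‖gradient u x‖ = 1)
    (hgradle : ∀ x ∈ Ω, ‖gradient u x‖ ≤ 1) :
    ∀ x ∈ frontier Ω,
      (u x = 1 →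
        ∑ i, fderiv ℝ (fun y => (‖gradient u y‖⁻¹ • gradient u y) i) x
            (EuclideanSpace.single i 1) ≤ 0) ∧
      (u x = -1 →
        0 ≤ ∑ i, fderiv ℝ (fun y => (‖gradient u y‖⁻¹ • gradient u y) i) x
            (EuclideanSpace.single i 1)) :=
  stmt_11_general n u U hU Ω hΩ hclos hu hharm hgrad1 hgradle
end

section
/- Let θ: [r₀, ∞) → [0, ∞) be a function, C > 0, β > 0 constants, and suppose for some d with C·e^{−βd} ≤ 1/4 the inequality θ(a + d) ≤ C·e^{−βd}·(θ(a) + θ(a − d)) + C·a^{−2} holds for all a ≥ r₀ + d. If θ is bounded, then there exists C̄ such that θ(a) ≤ C̄·a^{−2} for all a ≥ 2r₀. -/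
/-!
Once `θ ≤ K a⁻²` is known on the two previous steps `a - d` and `a - 2d`, the recursion with
`C e^{-βd} ≤ 1/4` gives `θ a ≤ (K/2 + C)(a - 2d)⁻²`, and for `a ≥ 12d` this is at most
`(36/25)(K/2 + C) a⁻² ≤ K a⁻²` as soon as `K ≥ 6C`. Boundedness of `θ` provides the bound on an
initial window of length `12d`, from which it propagates step by step.
-/

theorem forall_ge_of_forall_Icc_of_two_step {P : ℝ → Prop} {r B d : ℝ} (hd : 0 < d)
    (hB : r + 2 * d ≤ B) (hbase : ∀ a ∈ Set.Icc r B, P a)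
    (hstep : ∀ a > B, P (a - d) → P (a - 2 * d) → P a) :
    ∀ a ≥ r, P a := by
  have hwindow : ∀ n : ℕ, ∀ a ∈ Set.Icc r (B + n * d), P a := by
    intro n
    induction n with
    | zero => simpa using hbase
    | succ n ih =>
      rintro a ⟨hra, haB⟩
      push_cast at haB
      rcases le_or_gt a (B + n * d) with h | h
      · exact ih a ⟨hra, h⟩
      · have hBa : B < a := by nlinarith [n.cast_nonneg (α := ℝ)]
        exact hstep a hBa (ih _ ⟨by linarith, by linarith⟩) (ih _ ⟨by linarith, by linarith⟩)
  intro a ha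
  obtain ⟨n, hn⟩ := exists_nat_ge ((a - B) / d)
  exact hwindow n a ⟨ha, by linarith [(div_le_iff₀ hd).1 hn]⟩

theorem inv_sq_le_inv_sq {x y : ℝ} (hx : 0 < x) (hxy : x ≤ y) : y⁻¹ ^ 2 ≤ x⁻¹ ^ 2 :=
  pow_le_pow_left₀ (inv_nonneg.2 (hx.le.trans hxy)) (inv_anti₀ hx hxy) 2

theorem inv_sq_sub_two_mul_le {a d : ℝ} (hd : 0 < d) (ha : 12 * d ≤ a) :
    (a - 2 * d)⁻¹ ^ 2 ≤ 36 / 25 * a⁻¹ ^ 2 := by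
  calc (a - 2 * d)⁻¹ ^ 2 ≤ (5 * a / 6)⁻¹ ^ 2 := inv_sq_le_inv_sq (by linarith) (by linarith)
    _ = 36 / 25 * a⁻¹ ^ 2 := by rw [inv_div]; ring

theorem le_mul_inv_sq_of_two_step {θ : ℝ → ℝ} {q c K a d : ℝ} (hq₀ : 0 ≤ q) (hq : q ≤ 1 / 4)
    (hc : 0 ≤ c) (hK : 6 * c ≤ K) (hd : 0 < d) (ha : 12 * d ≤ a)
    (hrec : θ a ≤ q * (θ (a - d) + θ (a - 2 * d)) + c * (a - d)⁻¹ ^ 2)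
    (h₁ : θ (a - d) ≤ K * (a - d)⁻¹ ^ 2) (h₂ : θ (a - 2 * d) ≤ K * (a - 2 * d)⁻¹ ^ 2) :
    θ a ≤ K * a⁻¹ ^ 2 := by
  set s := (a - 2 * d)⁻¹ ^ 2
  have hK₀ : 0 ≤ K := by linarith
  have hds : (a - d)⁻¹ ^ 2 ≤ s := inv_sq_le_inv_sq (by linarith) (by linarith)
  calc θ a ≤ q * (K * (a - d)⁻¹ ^ 2 + K * s) + c * (a - d)⁻¹ ^ 2 := by
        linarith [mul_le_mul_of_nonneg_left (add_le_add h₁ h₂) hq₀]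
    _ ≤ 1 / 4 * (K * s + K * s) + c * s := by gcongr
    _ = (K / 2 + c) * s := by ring
    _ ≤ (K / 2 + c) * (36 / 25 * a⁻¹ ^ 2) := by gcongr; exact inv_sq_sub_two_mul_le hd ha
    _ ≤ K * a⁻¹ ^ 2 := by nlinarith [sq_nonneg a⁻¹]

theorem le_mul_sq_mul_inv_sq_of_le {M B a : ℝ} (hM : 0 ≤ M) (ha : 0 < a) (haB : a ≤ B) :
    M ≤ M * B ^ 2 * a⁻¹ ^ 2 := by
  have h : 1 ≤ (B / a) ^ 2 := one_le_pow₀ ((one_le_div ha).2 haB)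
  calc M = M * 1 := (mul_one M).symm
    _ ≤ M * (B / a) ^ 2 := by gcongr
    _ = M * B ^ 2 * a⁻¹ ^ 2 := by ring

theorem stmt_17_general (r₀ C β d : ℝ) (hr₀ : 0 < r₀) (hC : 0 < C) (hd : 0 < d)
    (hsmall : C * Real.exp (-β * d) ≤ 1 / 4)
    (θ : ℝ → ℝ)
    (hrec : ∀ a ≥ r₀ + d,
      θ (a + d) ≤ C * Real.exp (-β * d) * (θ a + θ (a - d)) + C * a⁻¹ ^ 2)
    (hbdd : ∃ M : ℝ, ∀ a ∈ Set.Ici r₀, θ a ≤ M) :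
    ∃ Cbar : ℝ, ∀ a ≥ 2 * r₀, θ a ≤ Cbar * a⁻¹ ^ 2 := by
  obtain ⟨M, hM⟩ := hbdd
  set B := r₀ + 12 * d
  set K := max (6 * C) (max M 0 * B ^ 2)
  refine ⟨K, fun a ha => ?_⟩
  refine forall_ge_of_forall_Icc_of_two_step (P := fun a => θ a ≤ K * a⁻¹ ^ 2) (r := r₀) (B := B) hd
    (by linarith) ?_ ?_ a (by linarith)
  · rintro a ⟨hra, haB⟩
    calc θ a ≤ max M 0 := (hM a hra).trans (le_max_left _ _)
      _ ≤ max M 0 * B ^ 2 * a⁻¹ ^ 2 :=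
        le_mul_sq_mul_inv_sq_of_le (le_max_right _ _) (by linarith) haB
      _ ≤ K * a⁻¹ ^ 2 := by gcongr; exact le_max_right _ _
  · intro a ha h₁ h₂
    have hrec' := hrec (a - d) (by linarith)
    rw [sub_add_cancel, sub_sub, ← two_mul] at hrec'
    exact le_mul_inv_sq_of_two_step (by positivity) hsmall hC.le (le_max_left _ _) hd
      (by linarith) hrec' h₁ h₂

/-- Let θ : [r₀, ∞) → [0, ∞), C > 0, β > 0, and suppose for some d > 0 with
C·e^{−βd} ≤ 1/4 the inequality θ(a + d) ≤ C·e^{−βd}·(θ(a) + θ(a − d)) + C·a⁻² holds for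
all a ≥ r₀ + d. If θ is bounded, then there exists C̄ such that θ(a) ≤ C̄·a⁻² for all
a ≥ 2r₀. -/
theorem stmt_17 (r₀ C β d : ℝ) (hr₀ : 0 < r₀) (hC : 0 < C) (hβ : 0 < β) (hd : 0 < d)
    (hsmall : C * Real.exp (-β * d) ≤ 1 / 4)
    (θ : ℝ → ℝ) (hθ0 : ∀ a ∈ Set.Ici r₀, 0 ≤ θ a)
    (hrec : ∀ a ≥ r₀ + d,
      θ (a + d) ≤ C * Real.exp (-β * d) * (θ a + θ (a - d)) + C * a⁻¹ ^ 2)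
    (hbdd : ∃ M : ℝ, ∀ a ∈ Set.Ici r₀, θ a ≤ M) :
    ∃ Cbar : ℝ, ∀ a ≥ 2 * r₀, θ a ≤ Cbar * a⁻¹ ^ 2 :=
  stmt_17_general r₀ C β d hr₀ hC hd hsmall θ hrec hbdd
end

section
/- Let p: [r₀, ∞) → ℝ be C² with (r·p'/√(1+p'²))' = O(r⁻³) as r → ∞. Then there exist constants k̄ and b such that p'(r) = k̄/r + O(r⁻³) and p(r) = k̄·ln r + b + O(r⁻¹) as r → ∞. -/
open Set Real

lemma key_conv (a c : ℝ) (ha : 1 ≤ a) (hc : 0 ≤ c) (f : ℝ → ℝ)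
    (hf : ∀ s ∈ Ioi a, DifferentiableAt ℝ f s)
    (hb : ∀ s ∈ Ioi a, |deriv f s| ≤ c / s ^ 3) :
    ∃ k : ℝ, ∀ s ∈ Ioi a, |f s - k| ≤ c / (2 * s ^ 2) := by
  set B : ℝ → ℝ := fun s => f s - c / (2 * s ^ 2) with hBdef
  set A : ℝ → ℝ := fun s => f s + c / (2 * s ^ 2) with hAdef
  have hq : ∀ s ∈ Ioi a, HasDerivAt (fun s : ℝ => c / (2 * s ^ 2)) (-(c / s ^ 3)) s := by
    intro s hs
    have hs0 : s ≠ 0 := by have : (1:ℝ) ≤ s := le_of_lt (lt_of_le_of_lt ha hs); positivity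
    have h1 : HasDerivAt (fun s : ℝ => s ^ 2) (2 * s) s := by simpa using hasDerivAt_pow 2 s
    have h2 := (h1.inv (pow_ne_zero 2 hs0)).const_mul (c / 2)
    have heq : (fun s : ℝ => c / 2 * (s ^ 2)⁻¹) = fun s : ℝ => c / (2 * s ^ 2) := by
      funext t; by_cases ht : t = 0
      · simp [ht]
      · field_simp
    change HasDerivAt (fun s : ℝ => c / 2 * (s ^ 2)⁻¹) _ s at h2
    rw [heq] at h2
    convert h2 using 1
    field_simp
  have hqdiff : ∀ s ∈ Ioi a, DifferentiableAt ℝ (fun s : ℝ => c / (2 * s ^ 2)) s :=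
    fun s hs => (hq s hs).differentiableAt
  have hBmono : MonotoneOn B (Ioi a) := by
    apply monotoneOn_of_deriv_nonneg (convex_Ioi a)
    · exact fun s hs => (((hf s hs).sub (hqdiff s hs)).continuousAt).continuousWithinAt
    · rw [interior_Ioi]
      exact fun s hs => ((hf s hs).sub (hqdiff s hs)).differentiableWithinAt
    · rw [interior_Ioi]
      intro s hs
      have hd : HasDerivAt B (deriv f s - -(c / s ^ 3)) s :=
        ((hf s hs).hasDerivAt).sub (hq s hs)
      rw [hd.deriv]
      have := (abs_le.mp (hb s hs)).1
      linarith
  have hAanti : AntitoneOn A (Ioi a) := by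
    apply antitoneOn_of_deriv_nonpos (convex_Ioi a)
    · exact fun s hs => (((hf s hs).add (hqdiff s hs)).continuousAt).continuousWithinAt
    · rw [interior_Ioi]
      exact fun s hs => ((hf s hs).add (hqdiff s hs)).differentiableWithinAt
    · rw [interior_Ioi]
      intro s hs
      have hd : HasDerivAt A (deriv f s + -(c / s ^ 3)) s :=
        ((hf s hs).hasDerivAt).add (hq s hs)
      rw [hd.deriv]
      have := (abs_le.mp (hb s hs)).2
      linarith
  have hBA : ∀ s ∈ Ioi a, B s ≤ A s := by
    intro s hs
    have hs1 : (1:ℝ) ≤ s := le_of_lt (lt_of_le_of_lt ha hs)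
    have : 0 ≤ c / (2 * s ^ 2) := by positivity
    simp only [hBdef, hAdef]; linarith
  have hub : ∀ s ∈ Ioi a, ∀ t ∈ Ioi a, B t ≤ A s := by
    intro s hs t ht
    rcases le_total t s with h | h
    · exact le_trans (hBmono ht hs h) (hBA s hs)
    · exact le_trans (hBA t ht) (hAanti hs ht h)
  have hne : (B '' Ioi a).Nonempty := ⟨B (a + 1), mem_image_of_mem B (mem_Ioi.mpr (by linarith))⟩
  have hbdd : BddAbove (B '' Ioi a) := by
    refine ⟨A (a + 1), ?_⟩
    rintro y ⟨t, ht, rfl⟩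
    exact hub (a + 1) (mem_Ioi.mpr (by linarith)) t ht
  refine ⟨sSup (B '' Ioi a), fun s hs => ?_⟩
  have h1 : B s ≤ sSup (B '' Ioi a) := le_csSup hbdd (mem_image_of_mem B hs)
  have h2 : sSup (B '' Ioi a) ≤ A s := csSup_le hne (by rintro y ⟨t, ht, rfl⟩; exact hub s hs t ht)
  simp only [hBdef, hAdef] at h1 h2
  rw [abs_le]
  constructor <;> linarith


set_option maxHeartbeats 1000000 in
/-- 3D case: Let p : [r₀, ∞) → ℝ be C² with
(r·p'/√(1+p'²))' = O(r⁻³) (mean curvature of the surface of revolution z = p(r) in ℝ³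
decaying like r⁻³). Then there exist constants k̄ and b such that
p'(r) = k̄/r + O(r⁻³) and p(r) = k̄·ln r + b + O(r⁻¹) as r → ∞. -/
theorem stmt_18 (r₀ : ℝ) (hr₀ : 1 ≤ r₀) (p : ℝ → ℝ)
    (hp : ContDiffOn ℝ 2 p (Set.Ici r₀))
    (hH : ∃ C : ℝ, ∀ r ≥ r₀,
      |deriv (fun s => s * deriv p s / Real.sqrt (1 + (deriv p s) ^ 2)) r| ≤ C / r ^ 3) :
    ∃ kbar b C' : ℝ,
      (∀ r ≥ r₀, |deriv p r - kbar / r| ≤ C' / r ^ 3) ∧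
      (∀ r ≥ r₀, |p r - kbar * Real.log r - b| ≤ C' / r) := by
  obtain ⟨C, hC⟩ := hH
  have hr₀0 : (0:ℝ) < r₀ := lt_of_lt_of_le one_pos hr₀
  have hCpos : 0 ≤ C := by
    have h0 := hC r₀ le_rfl
    have h1 : (0:ℝ) ≤ C / r₀ ^ 3 := le_trans (abs_nonneg _) h0
    by_contra h
    push_neg at h
    have : C / r₀ ^ 3 < 0 := div_neg_of_neg_of_pos h (by positivity)
    linarith
  have hp' : ∀ s ∈ Ioi r₀, ContDiffAt ℝ 2 p s := by
    intro s hs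
    exact (hp.mono Ioi_subset_Ici_self).contDiffAt (Ioi_mem_nhds hs)
  have hpd : ∀ s ∈ Ioi r₀, DifferentiableAt ℝ p s :=
    fun s hs => (hp' s hs).differentiableAt (by norm_num)
  have hdp : ∀ s ∈ Ioi r₀, DifferentiableAt ℝ (deriv p) s := by
    intro s hs
    have h1 : ContDiffOn ℝ 1 (deriv p) (Ioi r₀) :=
      (hp.mono Ioi_subset_Ici_self).deriv_of_isOpen isOpen_Ioi (by norm_num)
    exact ((h1.contDiffAt (Ioi_mem_nhds hs)).differentiableAt (by norm_num))
  set f : ℝ → ℝ := fun s => s * deriv p s / Real.sqrt (1 + (deriv p s) ^ 2) with hfdef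
  have hfd : ∀ s ∈ Ioi r₀, DifferentiableAt ℝ f s := by
    intro s hs
    have h1 : (0:ℝ) < 1 + (deriv p s) ^ 2 := by positivity
    have hsq : DifferentiableAt ℝ (fun s => Real.sqrt (1 + (deriv p s) ^ 2)) s := by
      apply DifferentiableAt.sqrt
      · exact (differentiableAt_const 1).add ((hdp s hs).pow 2)
      · exact ne_of_gt h1
    have hne : Real.sqrt (1 + (deriv p s) ^ 2) ≠ 0 := ne_of_gt (Real.sqrt_pos.mpr h1)
    exact ((differentiableAt_id.mul (hdp s hs)).div hsq hne)
  obtain ⟨kbar, hkbar⟩ := key_conv r₀ C hr₀ hCpos f hfd (fun s hs => hC s (le_of_lt hs))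
  set M : ℝ := |kbar| + C / 2 with hMdef
  have hM0 : 0 ≤ M := by positivity
  set s₁ : ℝ := max (r₀ + 1) (2 * M) with hs₁def
  have hs₁r₀ : r₀ < s₁ := lt_of_lt_of_le (by linarith) (le_max_left _ _)
  have hs₁1 : (1:ℝ) ≤ s₁ := by linarith
  have hmain : ∀ s, s₁ ≤ s → |deriv p s - kbar / s| ≤ (8 * M ^ 3 + C / 2) / s ^ 3 := by
    intro s hs
    have hsr₀ : r₀ < s := lt_of_lt_of_le hs₁r₀ hs
    have hs1 : (1:ℝ) ≤ s := le_trans hs₁1 hs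
    have hs0 : (0:ℝ) < s := by linarith
    have hs2M : 2 * M ≤ s := le_trans (le_max_right _ _) hs
    set u : ℝ := deriv p s with hudef
    set t : ℝ := 1 + u ^ 2 with htdef
    have ht1 : (1:ℝ) ≤ t := by have := sq_nonneg u; linarith
    have ht0 : (0:ℝ) < t := by linarith
    set rt : ℝ := Real.sqrt t with hrtdef
    have hrt1 : (1:ℝ) ≤ rt := Real.one_le_sqrt.mpr ht1
    have hrt2 : rt ^ 2 = t := Real.sq_sqrt (le_of_lt ht0)
    have hrt0 : (0:ℝ) < rt := by linarith
    have hfk : |f s - kbar| ≤ C / (2 * s ^ 2) := hkbar s hsr₀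
    have hfM : |f s| ≤ M := by
      have h1 : C / (2 * s ^ 2) ≤ C / 2 := by
        apply div_le_div_of_nonneg_left hCpos (by norm_num)
        nlinarith
      calc |f s| ≤ |f s - kbar| + |kbar| := by
            have h2 := abs_sub_abs_le_abs_sub (f s) kbar
            linarith
        _ ≤ C / (2 * s ^ 2) + |kbar| := by linarith
        _ ≤ M := by rw [hMdef]; linarith
    set x : ℝ := f s / s with hxdef
    have hfs : f s = s * u / rt := rfl
    have hxu : x = u / rt := by
      rw [hxdef, hfs]
      field_simp
    have hx : |x| ≤ M / s := by
      rw [hxdef, abs_div, abs_of_pos hs0]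
      gcongr
    have hxhalf : |x| ≤ 1 / 2 := by
      refine le_trans hx ?_
      rw [div_le_div_iff₀ hs0 two_pos]
      linarith
    have hx14 : x ^ 2 ≤ 1 / 4 := by nlinarith [sq_abs x, abs_nonneg x]
    have hx2 : x ^ 2 = u ^ 2 / t := by rw [hxu, div_pow, hrt2]
    have hid : u ^ 2 * (1 - x ^ 2) = x ^ 2 := by
      rw [hx2]; field_simp; ring
    have hu2 : u ^ 2 ≤ 4 * x ^ 2 := by
      have h5 : u ^ 2 * x ^ 2 ≤ u ^ 2 * (1 / 4) :=
        mul_le_mul_of_nonneg_left hx14 (sq_nonneg u)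
      have h6 := sq_nonneg x
      linarith [hid]
    have hu : |u| ≤ 2 * |x| := by
      have h6 : u ^ 2 ≤ (2 * |x|) ^ 2 := by rw [mul_pow, sq_abs]; linarith
      calc |u| = Real.sqrt (u ^ 2) := (Real.sqrt_sq_eq_abs u).symm
        _ ≤ Real.sqrt ((2 * |x|) ^ 2) := Real.sqrt_le_sqrt h6
        _ = 2 * |x| := Real.sqrt_sq (by positivity)
    have hrtt : rt ≤ t := by nlinarith [hrt1, hrt2]
    have huxeq : u - x = u * (rt - 1) / rt := by
      rw [hxu]; field_simp
    have hux : |u - x| ≤ |u| ^ 3 := by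
      rw [huxeq, abs_div, abs_mul, abs_of_pos hrt0,
        abs_of_nonneg (by linarith : (0:ℝ) ≤ rt - 1)]
      rw [div_le_iff₀ hrt0]
      have h1 : rt - 1 ≤ u ^ 2 := by linarith
      calc |u| * (rt - 1) ≤ |u| * u ^ 2 := mul_le_mul_of_nonneg_left h1 (abs_nonneg u)
        _ = |u| ^ 3 := by rw [← sq_abs]; ring
        _ ≤ |u| ^ 3 * rt := le_mul_of_one_le_right (by positivity) hrt1
    have hu3 : |u| ^ 3 ≤ 8 * M ^ 3 / s ^ 3 := by
      have h1 : |u| ≤ 2 * M / s := by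
        refine le_trans hu ?_
        calc 2 * |x| ≤ 2 * (M / s) := by linarith
          _ = 2 * M / s := by ring
      calc |u| ^ 3 ≤ (2 * M / s) ^ 3 := by
            exact pow_le_pow_left₀ (abs_nonneg u) h1 3
        _ = 8 * M ^ 3 / s ^ 3 := by ring
    have hxk : |x - kbar / s| ≤ C / (2 * s ^ 3) := by
      have heq : x - kbar / s = (f s - kbar) / s := by rw [hxdef]; ring
      rw [heq, abs_div, abs_of_pos hs0]
      calc |f s - kbar| / s ≤ (C / (2 * s ^ 2)) / s := by
            exact (div_le_div_iff_of_pos_right hs0).mpr hfk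
        _ = C / (2 * s ^ 3) := by rw [div_div]; congr 1; ring
    calc |u - kbar / s| ≤ |u - x| + |x - kbar / s| := abs_sub_le u x (kbar / s)
      _ ≤ 8 * M ^ 3 / s ^ 3 + C / (2 * s ^ 3) := by linarith
      _ = (8 * M ^ 3 + C / 2) / s ^ 3 := by field_simp
  -- compact region bound
  have hgc : ContinuousOn (derivWithin p (Ici r₀)) (Ici r₀) :=
    hp.continuousOn_derivWithin (uniqueDiffOn_Ici r₀) (by norm_num)
  have hcont : ContinuousOn (fun s => derivWithin p (Ici r₀) s - kbar / s) (Icc r₀ s₁) := by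
    apply ContinuousOn.sub (hgc.mono Icc_subset_Ici_self)
    apply ContinuousOn.div continuousOn_const continuousOn_id
    intro s hs; exact ne_of_gt (lt_of_lt_of_le hr₀0 hs.1)
  obtain ⟨K₀, hK₀⟩ := (isCompact_Icc).exists_bound_of_continuousOn hcont
  set K : ℝ := max K₀ |deriv p r₀ - kbar / r₀| with hKdef
  have hK0 : 0 ≤ K := le_trans (abs_nonneg _) (le_max_right _ _)
  have hcompact : ∀ s, r₀ ≤ s → s ≤ s₁ → |deriv p s - kbar / s| ≤ K := by
    intro s hs hs'
    rcases eq_or_lt_of_le hs with rfl | h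
    · exact le_max_right _ _
    · have heq : derivWithin p (Ici r₀) s = deriv p s :=
        derivWithin_of_mem_nhds (Ici_mem_nhds h)
      have h2 := hK₀ s ⟨hs, hs'⟩
      rw [Real.norm_eq_abs, heq] at h2
      exact le_trans h2 (le_max_left _ _)
  set C₁ : ℝ := 8 * M ^ 3 + C / 2 with hC₁def
  set C₂ : ℝ := K * s₁ ^ 3 with hC₂def
  set C' : ℝ := max C₁ C₂ with hC'def
  have hC₁0 : 0 ≤ C₁ := by positivity
  have hC'0 : 0 ≤ C' := le_trans hC₁0 (le_max_left _ _)
  have part1 : ∀ r ≥ r₀, |deriv p r - kbar / r| ≤ C' / r ^ 3 := by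
    intro r hr
    have hr0 : (0:ℝ) < r := lt_of_lt_of_le hr₀0 hr
    rcases le_total s₁ r with h | h
    · refine le_trans (hmain r h) ?_
      gcongr
      exact le_max_left _ _
    · refine le_trans (hcompact r hr h) ?_
      have hs₁0 : (0:ℝ) < s₁ := by linarith
      have h1 : K = K * s₁ ^ 3 / s₁ ^ 3 := by field_simp
      rw [h1]
      calc K * s₁ ^ 3 / s₁ ^ 3 ≤ C' / s₁ ^ 3 := by gcongr; exact le_max_right _ _
        _ ≤ C' / r ^ 3 := by gcongr
  set F : ℝ → ℝ := fun s => p s - kbar * Real.log s with hFdef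
  have hFd : ∀ s ∈ Ioi r₀, DifferentiableAt ℝ F s := by
    intro s hs
    have hs0 : s ≠ 0 := ne_of_gt (lt_trans hr₀0 hs)
    exact (hpd s hs).sub ((Real.differentiableAt_log hs0).const_mul kbar)
  have hFb : ∀ s ∈ Ioi r₀, |deriv F s| ≤ C' / s ^ 3 := by
    intro s hs
    have hs0 : s ≠ 0 := ne_of_gt (lt_trans hr₀0 hs)
    have hd : HasDerivAt F (deriv p s - kbar * s⁻¹) s :=
      ((hpd s hs).hasDerivAt).sub ((Real.hasDerivAt_log hs0).const_mul kbar)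
    rw [hd.deriv]
    have h1 := part1 s (le_of_lt hs)
    rwa [div_eq_mul_inv kbar s] at h1
  obtain ⟨b, hb⟩ := key_conv r₀ C' hr₀ hC'0 F hFd hFb
  refine ⟨kbar, b, C', part1, ?_⟩
  intro r hr
  have half : ∀ s, 0 < s → C' / (2 * s ^ 2) ≤ C' / s → True := fun _ _ _ => trivial
  rcases eq_or_lt_of_le hr with rfl | h
  · have hFc : ContinuousWithinAt F (Ioi r₀) r₀ := by
      apply ContinuousWithinAt.mono _ Ioi_subset_Ici_self
      apply ContinuousWithinAt.sub (hp.continuousOn.continuousWithinAt self_mem_Ici)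
      exact (((Real.continuousAt_log (ne_of_gt hr₀0)).continuousWithinAt).const_mul kbar)
    have h1 : Filter.Tendsto (fun s => |F s - b|) (nhdsWithin r₀ (Ioi r₀))
        (nhds (|F r₀ - b|)) := (hFc.sub continuousWithinAt_const).abs
    have h2 : Filter.Tendsto (fun s : ℝ => C' / (2 * s ^ 2)) (nhdsWithin r₀ (Ioi r₀))
        (nhds (C' / (2 * r₀ ^ 2))) := by
      apply Filter.Tendsto.mono_left _ nhdsWithin_le_nhds
      exact (continuousAt_const.div
        (continuousAt_const.mul (continuousAt_id.pow 2)) (mul_ne_zero two_ne_zero (pow_ne_zero 2 (ne_of_gt hr₀0)))).tendsto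
    have h3 : |F r₀ - b| ≤ C' / (2 * r₀ ^ 2) := by
      refine le_of_tendsto_of_tendsto h1 h2 ?_
      filter_upwards [self_mem_nhdsWithin] with s hs
      exact hb s hs
    have h4 : C' / (2 * r₀ ^ 2) ≤ C' / r₀ := by
      apply div_le_div_of_nonneg_left hC'0 hr₀0
      nlinarith
    calc |p r₀ - kbar * Real.log r₀ - b| = |F r₀ - b| := rfl
      _ ≤ C' / r₀ := le_trans h3 h4
  · have h5 := hb r h
    have hrpos : (0:ℝ) < r := lt_trans hr₀0 h
    have hr1 : (1:ℝ) ≤ r := by linarith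
    have h4 : C' / (2 * r ^ 2) ≤ C' / r := by
      apply div_le_div_of_nonneg_left hC'0 hrpos
      nlinarith
    exact le_trans h5 h4
end
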